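/- Let n ≥ 1 and s ∈ (0,1), and define P : ℝ^n × (0,∞) → ℝ by P(x,λ) = λ^{2s}(|x|² + λ²)^{−(n+2s)/2}. Then P is smooth on ℝ^n × (0,∞) and satisfies Δ_x P(x,λ) + ((1−2s)/λ) ∂_λ P(x,λ) + ∂²_{λλ} P(x,λ) = 0 for all (x,λ) ∈ ℝ^n × (0,∞); equivalently, div(λ^{1−2s} ∇P) = 0 in ℝ^n × (0,∞), where ∇ and div are taken with respect to the full variables (x,λ). -/

import Mathlib

/-!
With `u = |x|² + λ²` and `α = -(n + 2s)/2` we have `P = λ^{2s} u^α`, and every term of the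
operator is `λ^{2s-2} u^{α-2}` times a polynomial in `λ², |x|², u`. Differentiating along the lines
`t ↦ x + t eᵢ` gives `Δ_x P = 2α λ^{2s} u^{α-2} (n u + 2(α - 1)|x|²)`; adding the `λ`-terms, the
`u²` contributions cancel and what remains is `2α λ^{2s} u^{α-1} (n + 2s + 2α)`, which vanishes
by the choice of `α`.
-/

open MeasureTheory Filter Set

/-- The Poisson-type kernel `P(x,λ) = λ^{2s}(|x|²+λ²)^{−(n+2s)/2}`. -/
noncomputable def Pker (n : ℕ) (s : ℝ) (x : EuclideanSpace ℝ (Fin n)) (lam : ℝ) : ℝ :=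
  lam ^ (2 * s) * (‖x‖ ^ 2 + lam ^ 2) ^ (-((n : ℝ) + 2 * s) / 2)

open Topology

theorem iteratedDeriv_two_eq_of_hasDerivAt {𝕜 F : Type*} [NontriviallyNormedField 𝕜]
    [NormedAddCommGroup F] [NormedSpace 𝕜 F] {f f' : 𝕜 → F} {x : 𝕜} {f'' : F}
    (hf : ∀ᶠ y in 𝓝 x, HasDerivAt f (f' y) y) (hf' : HasDerivAt f' f'' x) :
    iteratedDeriv 2 f x = f'' := by
  have hderiv : deriv f =ᶠ[𝓝 x] f' := hf.mono fun _ hy => hy.deriv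
  rw [iteratedDeriv_succ, iteratedDeriv_one, hderiv.deriv_eq, hf'.deriv]

theorem hasDerivAt_rpow_quadratic {a b α t : ℝ} (hq : 0 < a + 2 * b * t + t ^ 2) :
    HasDerivAt (fun t : ℝ => (a + 2 * b * t + t ^ 2) ^ α)
      ((2 * b + 2 * t) * α * (a + 2 * b * t + t ^ 2) ^ (α - 1)) t := by
  have hquad : HasDerivAt (fun t : ℝ => a + 2 * b * t + t ^ 2) (2 * b + 2 * t) t :=
    ((((hasDerivAt_id t).const_mul (2 * b)).const_add a).add (hasDerivAt_pow 2 t)).congr_deriv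
      (by norm_num)
  exact hquad.rpow_const (Or.inl hq.ne')

theorem iteratedDeriv_two_rpow_quadratic_zero {a b : ℝ} (α : ℝ) (hab : b ^ 2 < a) :
    iteratedDeriv 2 (fun t : ℝ => (a + 2 * b * t + t ^ 2) ^ α) 0
      = 2 * α * a ^ (α - 1) + 4 * b ^ 2 * α * (α - 1) * a ^ (α - 2) := by
  have hq : ∀ t : ℝ, 0 < a + 2 * b * t + t ^ 2 := fun t => by nlinarith [sq_nonneg (t + b)]
  have hlin : HasDerivAt (fun t : ℝ => 2 * b + 2 * t) 2 0 := by
    simpa using ((hasDerivAt_id (0 : ℝ)).const_mul 2).const_add (2 * b)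
  have hderiv : HasDerivAt (fun t : ℝ => (2 * b + 2 * t) * α * (a + 2 * b * t + t ^ 2) ^ (α - 1))
      _ 0 := (hlin.mul_const α).mul (hasDerivAt_rpow_quadratic (α := α - 1) (hq 0))
  refine iteratedDeriv_two_eq_of_hasDerivAt
    (.of_forall fun t => hasDerivAt_rpow_quadratic (hq t)) hderiv |>.trans ?_
  rw [show α - 1 - 1 = α - 2 by ring]
  ring_nf

theorem EuclideanSpace.norm_add_smul_single_sq {ι : Type*} [Fintype ι] [DecidableEq ι]
    (x : EuclideanSpace ℝ ι) (i : ι) (t : ℝ) :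
    ‖x + t • EuclideanSpace.single i 1‖ ^ 2 = ‖x‖ ^ 2 + 2 * x i * t + t ^ 2 := by
  rw [norm_add_sq_real, inner_smul_right, EuclideanSpace.inner_single_right, norm_smul,
    PiLp.norm_single]
  simp only [conj_trivial, one_mul, norm_one, mul_one, Real.norm_eq_abs, sq_abs]
  ring

theorem EuclideanSpace.apply_sq_le_norm_sq {ι : Type*} [Fintype ι]
    (x : EuclideanSpace ℝ ι) (i : ι) : x i ^ 2 ≤ ‖x‖ ^ 2 := by
  rw [← sq_abs]
  exact pow_le_pow_left₀ (abs_nonneg _) (PiLp.norm_apply_le x i) 2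

theorem sum_iteratedDeriv_two_rpow_norm_add_smul_single_sq_add {ι : Type*} [Fintype ι]
    [DecidableEq ι] (x : EuclideanSpace ℝ ι) {c : ℝ} (hc : 0 < c) (β : ℝ) :
    ∑ i, iteratedDeriv 2 (fun t : ℝ => (‖x + t • EuclideanSpace.single i 1‖ ^ 2 + c) ^ β) 0
      = 2 * β * Fintype.card ι * (‖x‖ ^ 2 + c) ^ (β - 1)
        + 4 * β * (β - 1) * ‖x‖ ^ 2 * (‖x‖ ^ 2 + c) ^ (β - 2) := by
  have hline (i : ι) :
      iteratedDeriv 2 (fun t : ℝ => (‖x + t • EuclideanSpace.single i 1‖ ^ 2 + c) ^ β) 0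
        = 2 * β * (‖x‖ ^ 2 + c) ^ (β - 1)
          + 4 * x i ^ 2 * β * (β - 1) * (‖x‖ ^ 2 + c) ^ (β - 2) := by
    simp_rw [EuclideanSpace.norm_add_smul_single_sq, add_right_comm _ _ c]
    exact iteratedDeriv_two_rpow_quadratic_zero β
      (by linarith [EuclideanSpace.apply_sq_le_norm_sq x i])
  simp only [hline, Finset.sum_add_distrib, Finset.sum_const, Finset.card_univ, nsmul_eq_mul,
    EuclideanSpace.real_norm_sq_eq x, ← Finset.sum_mul, ← Finset.mul_sum]
  ring

theorem hasDerivAt_rpow_mul_sq_add_rpow (a : ℝ) {c : ℝ} (hc : 0 ≤ c) (β : ℝ) {l : ℝ} (hl : 0 < l) :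
    HasDerivAt (fun l : ℝ => l ^ a * (c + l ^ 2) ^ β)
      (a * l ^ (a - 1) * (c + l ^ 2) ^ β + 2 * β * l ^ (a + 1) * (c + l ^ 2) ^ (β - 1)) l := by
  have hsq : HasDerivAt (fun l : ℝ => c + l ^ 2) (2 * l) l := by
    simpa using (hasDerivAt_pow 2 l).const_add c
  refine ((Real.hasDerivAt_rpow_const (p := a) (Or.inl hl.ne')).mul
    (hsq.rpow_const (p := β) (Or.inl (by positivity)))).congr_deriv ?_
  rw [Real.rpow_add_one hl.ne']
  ring

theorem iteratedDeriv_two_rpow_mul_sq_add_rpow (a : ℝ) {c : ℝ} (hc : 0 ≤ c) (β : ℝ) {l : ℝ}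
    (hl : 0 < l) :
    iteratedDeriv 2 (fun l : ℝ => l ^ a * (c + l ^ 2) ^ β) l
      = a * ((a - 1) * l ^ (a - 2) * (c + l ^ 2) ^ β + 2 * β * l ^ a * (c + l ^ 2) ^ (β - 1))
        + 2 * β * ((a + 1) * l ^ a * (c + l ^ 2) ^ (β - 1)
          + 2 * (β - 1) * l ^ (a + 2) * (c + l ^ 2) ^ (β - 2)) := by
  have hfirst : ∀ᶠ m in 𝓝 l, HasDerivAt (fun l : ℝ => l ^ a * (c + l ^ 2) ^ β)
      (a * (m ^ (a - 1) * (c + m ^ 2) ^ β) + 2 * β * (m ^ (a + 1) * (c + m ^ 2) ^ (β - 1))) m := by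
    filter_upwards [lt_mem_nhds hl] with m hm
    convert hasDerivAt_rpow_mul_sq_add_rpow a hc β hm using 1
    ring
  convert iteratedDeriv_two_eq_of_hasDerivAt hfirst
    (((hasDerivAt_rpow_mul_sq_add_rpow (a - 1) hc β hl).const_mul a).add
      ((hasDerivAt_rpow_mul_sq_add_rpow (a + 1) hc (β - 1) hl).const_mul (2 * β))) using 2 <;>
    ring_nf

theorem Real.rpow_sub_two {x : ℝ} (hx : x ≠ 0) (y : ℝ) : x ^ (y - 2) = x ^ y / x ^ 2 := by
  simpa using Real.rpow_sub_natCast hx y 2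

theorem Real.rpow_add_two {x : ℝ} (hx : x ≠ 0) (y : ℝ) : x ^ (y + 2) = x ^ y * x ^ 2 := by
  simpa using Real.rpow_add_natCast hx y 2

theorem contDiffOn_Pker (n : ℕ) (s : ℝ) :
    ContDiffOn ℝ (⊤ : ℕ∞) (fun p : EuclideanSpace ℝ (Fin n) × ℝ => Pker n s p.1 p.2)
      {p | 0 < p.2} := by
  intro p (hp : 0 < p.2)
  unfold Pker
  refine ContDiffAt.contDiffWithinAt (ContDiffAt.mul ?_ ?_)
  · exact contDiff_snd.contDiffAt.rpow_const_of_ne hp.ne'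
  · exact ((contDiff_fst.norm_sq ℝ).add (contDiff_snd.pow 2)).contDiffAt.rpow_const_of_ne
      (by positivity)

theorem poisson_kernel_is_extension_solution_general
    (n : ℕ) (s : ℝ) :
    ContDiffOn ℝ (⊤ : ℕ∞)
      (fun p : EuclideanSpace ℝ (Fin n) × ℝ => Pker n s p.1 p.2)
      {p : EuclideanSpace ℝ (Fin n) × ℝ | 0 < p.2} ∧
    ∀ (x : EuclideanSpace ℝ (Fin n)) (lam : ℝ), 0 < lam →
      (∑ i : Fin n,
          iteratedDeriv 2 (fun t : ℝ => Pker n s (x + t • EuclideanSpace.single i 1) lam) 0)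
        + (1 - 2 * s) / lam * deriv (fun l : ℝ => Pker n s x l) lam
        + iteratedDeriv 2 (fun l : ℝ => Pker n s x l) lam = 0 := by
  refine ⟨contDiffOn_Pker n s, fun x lam hlam => ?_⟩
  simp only [Pker, iteratedDeriv_const_mul_field, ← Finset.mul_sum]
  rw [sum_iteratedDeriv_two_rpow_norm_add_smul_single_sq_add x (pow_pos hlam 2),
    (hasDerivAt_rpow_mul_sq_add_rpow (2 * s) (sq_nonneg ‖x‖) _ hlam).deriv,
    iteratedDeriv_two_rpow_mul_sq_add_rpow (2 * s) (sq_nonneg ‖x‖) _ hlam]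
  have hu : ‖x‖ ^ 2 + lam ^ 2 ≠ 0 := by positivity
  simp only [Real.rpow_sub_one hlam.ne', Real.rpow_add_one hlam.ne', Real.rpow_sub_two hlam.ne',
    Real.rpow_add_two hlam.ne', Real.rpow_sub_one hu, Real.rpow_sub_two hu, Fintype.card_fin]
  field_simp
  ring

/-- `P` is smooth on `ℝ^n × (0,∞)` and satisfies the degenerate elliptic
equation `Δ_x P + ((1−2s)/λ) ∂_λ P + ∂²_{λλ} P = 0` there (equivalently,
`div(λ^{1−2s}∇P) = 0`). -/
theorem poisson_kernel_is_extension_solution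
    (n : ℕ) (hn : 1 ≤ n) (s : ℝ) (hs : s ∈ Set.Ioo (0 : ℝ) 1) :
    ContDiffOn ℝ (⊤ : ℕ∞)
      (fun p : EuclideanSpace ℝ (Fin n) × ℝ => Pker n s p.1 p.2)
      {p : EuclideanSpace ℝ (Fin n) × ℝ | 0 < p.2} ∧
    ∀ (x : EuclideanSpace ℝ (Fin n)) (lam : ℝ), 0 < lam →
      (∑ i : Fin n,
          iteratedDeriv 2 (fun t : ℝ => Pker n s (x + t • EuclideanSpace.single i 1) lam) 0)
        + (1 - 2 * s) / lam * deriv (fun l : ℝ => Pker n s x l) lam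
        + iteratedDeriv 2 (fun l : ℝ => Pker n s x l) lam = 0 :=
  poisson_kernel_is_extension_solution_general n s
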